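/- arXiv:2305.16089 — 2 statements merged into one kernel-verified Lean document; each statement's English description precedes it below -/
import Mathlib

section
/- For every integer n ≥ 2 and every integer h, one has q_{n,n}(h) ≤ q_{n,n−1}(h) + (n − 1) in ℤ ∪ {+∞}, where q_{n,n−1} denotes the function q_{m+1,m} with m = n − 1. -/
/-! Locate `h > 0` in the blocks `(2(p+1)(q-1), 2pq]`, `q = n - p`, of `q_{n,n}`: there
`q_{n,n}(h) = n² + 2⌈h/2⌉ - 2p`. Since `p ↦ 2p(n-p)` decreases for `p ≥ n/2`, the block index
of `h` is the largest `p ≥ n/2` with `h ≤ 2p(n-p)`. Passing from `n - 1` to `n` therefore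
raises the index of `h` by at least one, and by two at the corners `h = 2pq + 1`, which is
exactly what the shifts `n - 1` and `n - 3` in `q_{n,n-1}` require. Above `⌊(n-1)²/2⌋` the
index for `n` is at least `⌊n/2⌋ + 1`, which beats the linear branch of `q_{n,n-1}`. -/

open Classical in
/-- The quantum lower bound function `q_{n,n}` for the Khovanov homology of `T(n,n)`:
`+∞` outside `[0, ⌊n²/2⌋]`, `n² - 2n` at `h = 0`, and `n² + 2⌈h/2⌉ - 2p` for
`2(p+1)(q-1) < h ≤ 2pq` where `p ≥ q ≥ 1`, `p + q = n` (with `q = n - p`). -/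
noncomputable def qnn (n h : ℤ) : WithTop ℤ :=
  if h < 0 ∨ n ^ 2 / 2 < h then ⊤
  else if h = 0 then ((n ^ 2 - 2 * n : ℤ) : WithTop ℤ)
  else if hc : ∃ p : ℤ, n - p ≤ p ∧ 1 ≤ n - p ∧
      2 * (p + 1) * (n - p - 1) < h ∧ h ≤ 2 * p * (n - p)
    then ((n ^ 2 + 2 * ((h + 1) / 2) - 2 * hc.choose : ℤ) : WithTop ℤ)
  else ⊤

open Classical in
/-- The quantum lower bound function `q_{n+1,n}` for the Khovanov homology of `T(n+1,n)`:
`+∞` outside `[0, ⌊n²/2⌋ + ⌊n/2⌋]`; `q_{n,n}(h) + n - 3` at `h = 2pq + 1 ≤ ⌊n²/2⌋`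
(`p ≥ q ≥ 1`, `p + q = n`); `q_{n,n}(h) + n - 1` at other `h` with `0 ≤ h ≤ ⌊n²/2⌋`;
and `⌊n²/2⌋ + 2h - 1` for `⌊n²/2⌋ ≤ h ≤ ⌊n²/2⌋ + ⌊n/2⌋`. -/
noncomputable def qn1n (n h : ℤ) : WithTop ℤ :=
  if h < 0 ∨ n ^ 2 / 2 + n / 2 < h then ⊤
  else if ∃ p : ℤ, n - p ≤ p ∧ 1 ≤ n - p ∧ h = 2 * p * (n - p) + 1 ∧ h ≤ n ^ 2 / 2
    then qnn n h + ((n - 3 : ℤ) : WithTop ℤ)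
  else if h ≤ n ^ 2 / 2 then qnn n h + ((n - 1 : ℤ) : WithTop ℤ)
  else ((n ^ 2 / 2 + 2 * h - 1 : ℤ) : WithTop ℤ)

/-- `h` lies in the interval `(2(p+1)(q-1), 2pq]` of `qnn n`, with `q = n - p`. -/
def QnnBlock (n h p : ℤ) : Prop :=
  n - p ≤ p ∧ 1 ≤ n - p ∧ 2 * (p + 1) * (n - p - 1) < h ∧ h ≤ 2 * p * (n - p)

theorem two_mul_mul_sub_le_of_le {n a b : ℤ} (hna : n ≤ 2 * a) (hab : a ≤ b) :
    2 * b * (n - b) ≤ 2 * a * (n - a) := by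
  nlinarith [mul_nonneg (sub_nonneg.2 hab) (show 0 ≤ a + b - n by omega)]

theorem two_mul_half_mul_sub_half (n : ℤ) :
    2 * ((n + 1) / 2) * (n - (n + 1) / 2) = n ^ 2 / 2 := by
  obtain ⟨a, rfl | rfl⟩ := Int.even_or_odd' n
  · rw [show (2 * a + 1) / 2 = a by omega, show (2 * a) ^ 2 = 2 * (2 * a ^ 2) by ring,
      Int.mul_ediv_cancel_left _ two_ne_zero]
    ring
  · rw [show (2 * a + 1 + 1) / 2 = a + 1 by omega,
      show (2 * a + 1) ^ 2 = 1 + 2 * (2 * a ^ 2 + 2 * a) by ring,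
      show 2 * (a + 1) * (2 * a + 1 - (a + 1)) = 2 * a ^ 2 + 2 * a by ring]
    omega

namespace QnnBlock

variable {n h p : ℤ}

theorem le_of_le_bound (hp : QnnBlock n h p) {p' : ℤ} (hhp' : h ≤ 2 * p' * (n - p')) :
    p' ≤ p := by
  obtain ⟨hqp, -, hlo, -⟩ := hp
  by_contra! hpp'
  have := two_mul_mul_sub_le_of_le (show n ≤ 2 * (p + 1) by omega) hpp'
  linarith

theorem unique (hp : QnnBlock n h p) {p' : ℤ} (hp' : QnnBlock n h p') : p = p' :=
  le_antisymm (hp'.le_of_le_bound hp.2.2.2) (hp.le_of_le_bound hp'.2.2.2)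

theorem exists_of_two_mul_le_sq (hn : 0 ≤ n) (h0 : 0 < h) (hh : 2 * h ≤ n ^ 2) :
    ∃ p, QnnBlock n h p := by
  replace hn : 2 ≤ n := by nlinarith
  have hbound : h ≤ 2 * ((n + 1) / 2) * (n - (n + 1) / 2) := by
    rw [two_mul_half_mul_sub_half]; omega
  obtain ⟨p, ⟨hnp, hpn, hhp⟩, hmax⟩ := Int.exists_greatest_of_bdd
    (P := fun p => n ≤ 2 * p ∧ p ≤ n - 1 ∧ h ≤ 2 * p * (n - p))
    ⟨n - 1, fun _ hz => hz.2.1⟩ ⟨(n + 1) / 2, by omega, by omega, hbound⟩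
  refine ⟨p, by omega, by omega, ?_, hhp⟩
  by_contra! hlo
  rcases eq_or_lt_of_le hpn with rfl | hpn
  · nlinarith
  · have := hmax (p + 1) ⟨by omega, by omega, by linarith⟩
    omega

theorem succ_le_of_pred {p' : ℤ} (hp : QnnBlock (n - 1) h p)
    (hp' : QnnBlock n h p') : p + 1 ≤ p' := by
  obtain ⟨hqp, hq, -, hhp⟩ := hp
  exact hp'.le_of_le_bound (by nlinarith)

end QnnBlock

theorem qnn_zero (n : ℤ) : qnn n 0 = ((n ^ 2 - 2 * n : ℤ) : WithTop ℤ) := by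
  rw [qnn, if_neg (by have := sq_nonneg n; omega), if_pos rfl]

theorem qnn_of_qnnBlock {n h p : ℤ} (h0 : 0 < h) (hp : QnnBlock n h p) :
    qnn n h = ((n ^ 2 + 2 * ((h + 1) / 2) - 2 * p : ℤ) : WithTop ℤ) := by
  have hh : 2 * h ≤ n ^ 2 := by nlinarith [sq_nonneg (n - 2 * p), hp.2.2.2]
  rw [qnn, if_neg (by omega), if_neg h0.ne', dif_pos ⟨p, hp.1, hp.2⟩]
  congr 3
  exact (hp.unique (Exists.choose_spec _)).symm

theorem qnn_eq_top_of_lt {n h : ℤ} (hh : n ^ 2 / 2 < h) : qnn n h = ⊤ := by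
  rw [qnn, if_pos (Or.inr hh)]

theorem qnn_le_qnn_sub_one_add {n : ℤ} (hn : 2 ≤ n) (h : ℤ) :
    qnn n h ≤ qnn (n - 1) h + ((2 * n - 3 : ℤ) : WithTop ℤ) := by
  rcases lt_trichotomy h 0 with hneg | rfl | hpos
  · simp [qnn, hneg]
  · rw [qnn_zero, qnn_zero, ← WithTop.coe_add, WithTop.coe_le_coe]
    linarith
  by_cases hh : (n - 1) ^ 2 / 2 < h
  · simp [qnn_eq_top_of_lt hh]
  have hh' : 2 * h ≤ (n - 1) ^ 2 := by omega
  obtain ⟨pm, hpm⟩ := QnnBlock.exists_of_two_mul_le_sq (by omega) hpos hh'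
  obtain ⟨p, hp⟩ := QnnBlock.exists_of_two_mul_le_sq (n := n) (by omega) hpos (by nlinarith)
  have := hpm.succ_le_of_pred hp
  rw [qnn_of_qnnBlock hpos hp, qnn_of_qnnBlock hpos hpm, ← WithTop.coe_add, WithTop.coe_le_coe]
  linarith

theorem qnn_le_qnn_sub_one_add_of_corner {n p : ℤ} (hqp : n - 1 - p ≤ p)
    (hq : 1 ≤ n - 1 - p) (hh : 2 * p * (n - 1 - p) + 1 ≤ (n - 1) ^ 2 / 2) :
    qnn n (2 * p * (n - 1 - p) + 1) ≤
      qnn (n - 1) (2 * p * (n - 1 - p) + 1) + ((2 * n - 5 : ℤ) : WithTop ℤ) := by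
  set h := 2 * p * (n - 1 - p) + 1
  have hpos : 0 < h := by nlinarith
  have hh' : 2 * h ≤ (n - 1) ^ 2 := by omega
  -- `h ≤ ⌊(n-1)²/2⌋` forces `p - q ≥ 2`, so `h` is the left end of block `p - 1` of `n - 1`.
  have hpq : n + 1 ≤ 2 * p := by
    by_contra!
    nlinarith [mul_nonneg (show 0 ≤ 2 * p - (n - 1) by omega) (show 0 ≤ n - 2 * p by omega)]
  have hpm : QnnBlock (n - 1) h (p - 1) := ⟨by omega, by omega, by nlinarith, by nlinarith⟩
  obtain ⟨p', hp'⟩ := QnnBlock.exists_of_two_mul_le_sq (n := n) (by omega) hpos (by nlinarith)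
  have := hp'.le_of_le_bound (p' := p + 1) (by nlinarith)
  rw [qnn_of_qnnBlock hpos hp', qnn_of_qnnBlock hpos hpm, ← WithTop.coe_add, WithTop.coe_le_coe]
  linarith

theorem qnn_le_of_sub_one_sq_div_two_lt {n h : ℤ} (hlo : (n - 1) ^ 2 / 2 < h)
    (hhi : h ≤ (n - 1) ^ 2 / 2 + (n - 1) / 2) :
    qnn n h ≤ (((n - 1) ^ 2 / 2 + 2 * h - 1 + (n - 1) : ℤ) : WithTop ℤ) := by
  have hpos : 0 < h := by have := sq_nonneg (n - 1); omega
  have hsq : n ^ 2 = (n - 1) ^ 2 + 2 * n - 1 := by ring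
  obtain ⟨p, hp⟩ := QnnBlock.exists_of_two_mul_le_sq (n := n) (by omega) hpos (by omega)
  rw [qnn_of_qnnBlock hpos hp, WithTop.coe_le_coe]
  obtain ⟨a, rfl | rfl⟩ := Int.even_or_odd' n
  · have hsq' : (2 * a - 1) ^ 2 = 2 * (2 * a ^ 2 - 2 * a) + 1 := by ring
    have := hp.le_of_le_bound (p' := a + 1)
      (by rw [show 2 * (a + 1) * (2 * a - (a + 1)) = 2 * a ^ 2 - 2 by ring]; omega)
    omega
  · have hsq' : (2 * a + 1 - 1) ^ 2 = 2 * (2 * a ^ 2) := by ring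
    have := hp.le_of_le_bound (p' := a + 1)
      (by rw [show 2 * (a + 1) * (2 * a + 1 - (a + 1)) = 2 * a ^ 2 + 2 * a by ring]; omega)
    omega

/-- Equation (d) of Lemma 5.3: for `n ≥ 2` and every integer `h`,
`q_(n,n)(h) ≤ q_(n,n-1)(h) + (n - 1)`, where `q_(n,n-1)` is `q_(m+1,m)` with
`m = n - 1`. -/
theorem qnn_le_qn1n_add (n : ℤ) (hn : 2 ≤ n) (h : ℤ) :
    qnn n h ≤ qn1n (n - 1) h + ((n - 1 : ℤ) : WithTop ℤ) := by
  rw [qn1n]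
  split_ifs with hout hcorner hlow
  · simp
  · obtain ⟨p, hqp, hq, rfl, hle⟩ := hcorner
    calc _ ≤ _ := qnn_le_qnn_sub_one_add_of_corner hqp hq hle
      _ = _ := by rw [add_assoc, ← WithTop.coe_add]; ring_nf
  · calc _ ≤ _ := qnn_le_qnn_sub_one_add hn h
      _ = _ := by rw [add_assoc, ← WithTop.coe_add]; ring_nf
  · simp only [not_or, not_lt, not_le] at hout hlow
    exact_mod_cast qnn_le_of_sub_one_sq_div_two_lt hlow hout.2
end

section
/- Let n ≥ 3 be an integer and let h be an integer with 0 < h ≤ ⌊(n−1)²/2⌋. Let p ≥ q ≥ 1 be integers with p + q = n and 2(p+1)(q−1) < h ≤ 2pq, and let p' ≥ q' ≥ 1 be integers with p' + q' = n − 1 and 2(p'+1)(q'−1) < h ≤ 2p'q'. Then q_{n−1,n−1}(h) + (2n − 3) = q_{n,n}(h) + 2(q' − q), an equality of integers (both values of these q-functions are finite). -/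
abbrev InBlock (n h p : ℤ) : Prop :=
  n - p ≤ p ∧ 1 ≤ n - p ∧ 2 * (p + 1) * (n - p - 1) < h ∧ h ≤ 2 * p * (n - p)

lemma antitoneOn_two_mul_mul_sub (n : ℤ) :
    AntitoneOn (fun p => 2 * p * (n - p)) {p | n ≤ 2 * p} := by
  intro a (ha : n ≤ 2 * a) b _ hab
  nlinarith [mul_nonneg (sub_nonneg.2 hab) (by linarith : (0 : ℤ) ≤ a + b - n)]

namespace InBlock

variable {n h p : ℤ}

lemma le_of_inBlock {p' : ℤ} (hb : InBlock n h p) (hb' : InBlock n h p') : p' ≤ p := by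
  obtain ⟨hp, -, hlo, -⟩ := hb
  obtain ⟨-, -, -, hhi'⟩ := hb'
  by_contra! hlt
  have : 2 * p' * (n - p') ≤ 2 * (p + 1) * (n - (p + 1)) :=
    antitoneOn_two_mul_mul_sub n (show n ≤ 2 * (p + 1) by linarith)
      (show n ≤ 2 * p' by linarith) (by linarith)
  linarith

lemma unique {p' : ℤ} (hb : InBlock n h p) (hb' : InBlock n h p') : p' = p :=
  le_antisymm (hb.le_of_inBlock hb') (hb'.le_of_inBlock hb)

lemma pos (hb : InBlock n h p) : 0 < h := by
  obtain ⟨hp, hq, hlo, -⟩ := hb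
  nlinarith

lemma le_sq_div_two (hb : InBlock n h p) : h ≤ n ^ 2 / 2 := by
  obtain ⟨-, -, -, hhi⟩ := hb
  rw [Int.le_ediv_iff_mul_le two_pos]
  nlinarith [sq_nonneg (2 * p - n)]

end InBlock

lemma inBlock_of_add_eq {n h p q : ℤ} (hsum : p + q = n) (hpq : q ≤ p) (hq : 1 ≤ q)
    (hlo : 2 * (p + 1) * (q - 1) < h) (hhi : h ≤ 2 * p * q) : InBlock n h p := by
  obtain rfl : q = n - p := by omega
  exact ⟨hpq, hq, hlo, hhi⟩

lemma qnn_of_inBlock {n h p : ℤ} (hb : InBlock n h p) :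
    qnn n h = ((n ^ 2 + 2 * ((h + 1) / 2) - 2 * p : ℤ) : WithTop ℤ) := by
  have hc : ∃ r, InBlock n h r := ⟨p, hb⟩
  have hrange : ¬(h < 0 ∨ n ^ 2 / 2 < h) := by
    push Not
    exact ⟨hb.pos.le, hb.le_sq_div_two⟩
  rw [qnn, if_neg hrange, if_neg hb.pos.ne', dif_pos hc, hb.unique hc.choose_spec]

theorem qnn_compare_general (n h p q p' q' : ℤ)
    (hpq : q ≤ p) (hq : 1 ≤ q) (hsum : p + q = n)
    (hlo : 2 * (p + 1) * (q - 1) < h) (hhi : h ≤ 2 * p * q)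
    (hpq' : q' ≤ p') (hq' : 1 ≤ q') (hsum' : p' + q' = n - 1)
    (hlo' : 2 * (p' + 1) * (q' - 1) < h) (hhi' : h ≤ 2 * p' * q') :
    qnn (n - 1) h + ((2 * n - 3 : ℤ) : WithTop ℤ)
      = qnn n h + ((2 * (q' - q) : ℤ) : WithTop ℤ) := by
  rw [qnn_of_inBlock (inBlock_of_add_eq hsum' hpq' hq' hlo' hhi'),
    qnn_of_inBlock (inBlock_of_add_eq hsum hpq hq hlo hhi)]
  norm_cast
  linear_combination 2 * hsum - 2 * hsum'

/-- The displayed identity (5.2) in the proof of Lemma 5.3: if `h` lies in the interval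
indexed by `(p, q)` at level `n` and in the interval indexed by `(p', q')` at level
`n - 1`, then `q_(n-1,n-1)(h) + (2n - 3) = q_(n,n)(h) + 2(q' - q)`. -/
theorem qnn_compare (n h p q p' q' : ℤ) (hn : 3 ≤ n) (h0 : 0 < h)
    (hmax : h ≤ (n - 1) ^ 2 / 2)
    (hpq : q ≤ p) (hq : 1 ≤ q) (hsum : p + q = n)
    (hlo : 2 * (p + 1) * (q - 1) < h) (hhi : h ≤ 2 * p * q)
    (hpq' : q' ≤ p') (hq' : 1 ≤ q') (hsum' : p' + q' = n - 1)
    (hlo' : 2 * (p' + 1) * (q' - 1) < h) (hhi' : h ≤ 2 * p' * q') :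
    qnn (n - 1) h + ((2 * n - 3 : ℤ) : WithTop ℤ)
      = qnn n h + ((2 * (q' - q) : ℤ) : WithTop ℤ) :=
  qnn_compare_general n h p q p' q' hpq hq hsum hlo hhi hpq' hq' hsum' hlo' hhi'
end
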